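/- arXiv:1203.6169 — 2 statements merged into one kernel-verified Lean document; each statement's English description precedes it below -/
import Mathlib

section
/- Let X be a bounded geometry metric space with ULA_μ. Then X admits a coarse embedding into the real Hilbert space ℓ²(ℕ). -/
/-- `N_R(E)`, the `R`-neighbourhood of `E`. -/
def nbhd {X : Type*} [MetricSpace X] (R : ℝ) (E : Set X) : Set X :=
  {y | ∃ e ∈ E, dist y e ≤ R}

/-- `∂_R E = N_R(E) \ E`. -/
def bdry {X : Type*} [MetricSpace X] (R : ℝ) (E : Set X) : Set X :=
  nbhd R E \ E

/-- Bounded geometry. -/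
def BoundedGeometry (X : Type*) [MetricSpace X] : Prop :=
  ∀ R : ℝ, 0 < R → ∃ N : ℕ, ∀ x : X,
    {y | dist x y ≤ R}.Finite ∧ {y | dist x y ≤ R}.ncard ≤ N

/-- A probability measure on `X`, as a function. -/
def IsProbFn {X : Type*} (μ : X → ℝ) : Prop :=
  (∀ x, 0 ≤ μ x) ∧ Summable μ ∧ ∑' x, μ x = 1

/-- `μ(E)`. -/
noncomputable def measOf {X : Type*} (μ : X → ℝ) (E : Set X) : ℝ := ∑' x : E, μ x

/-- Uniform local amenability. -/
def ULA (X : Type*) [MetricSpace X] : Prop :=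
  ∀ R : ℝ, 0 < R → ∀ ε : ℝ, 0 < ε → ∃ S : ℝ, 0 < S ∧
    ∀ F : Set X, F.Finite → ∃ E : Set X, E.Finite ∧
      EMetric.diam E ≤ ENNReal.ofReal S ∧
      ((bdry R E ∩ F).ncard : ℝ) < ε * ((E ∩ F).ncard : ℝ)

/-- Measured uniform local amenability. -/
def ULAmu (X : Type*) [MetricSpace X] : Prop :=
  ∀ R : ℝ, 0 < R → ∀ ε : ℝ, 0 < ε → ∃ S : ℝ, 0 < S ∧
    ∀ μ : X → ℝ, IsProbFn μ → ∃ E : Set X, E.Finite ∧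
      EMetric.diam E ≤ ENNReal.ofReal S ∧
      measOf μ (bdry R E) < ε * measOf μ E

/-- Coarse embedding. -/
def CoarseEmbedding {X Y : Type*} [MetricSpace X] [MetricSpace Y] (f : X → Y) : Prop :=
  ∃ ρm ρp : ℝ → ℝ, Monotone ρm ∧ Monotone ρp ∧
    Filter.Tendsto ρm Filter.atTop Filter.atTop ∧
    ∀ x₁ x₂ : X, ρm (dist x₁ x₂) ≤ dist (f x₁) (f x₂) ∧
      dist (f x₁) (f x₂) ≤ ρp (dist x₁ x₂)

/-!
`ULAmu` at scale `R` and ratio `ε` lets one greedily split any finitely supported weight into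
`R`-separated clusters of diameter at most `S` carrying all but an `ε`-fraction of it. Consider
the game in which one player chooses `ξ : X → Prob(X)` with `supp ξ_x ⊆ B(x, S)`, the other a pair
of `R`-close points `(x, y)`, and the first pays `‖ξ_x - ξ_y‖₁`. Against any mixed strategy of the
second player, sending every point to a representative of its cluster (for the marginal weight)
costs little. The strategy space of the first player is compact and convex, so a minimax argument
(Hahn–Banach in finitely many coordinates, then compactness) yields one `ξ` that is good against
every pair: property A. From `(k + 1, 2⁻ᵏ)`-families `ξᵏ`, the map
`x ↦ (√ξᵏ_x - √ξᵏ_{x₀})ₖ ∈ ℓ²(ℕ × X) ≅ ℓ²(ℕ)` is the usual coarse embedding. Bounded geometry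
makes the supports finite and `X` countable.
-/

open Set Finset Filter
open scoped Pointwise Classical

theorem IsCompact.isClosed_upperClosure {α : Type*} [AddCommGroup α] [PartialOrder α]
    [IsOrderedAddMonoid α] [TopologicalSpace α] [IsTopologicalAddGroup α] [ClosedIciTopology α]
    {s : Set α} (hs : IsCompact s) : IsClosed (upperClosure s : Set α) := by
  have : (upperClosure s : Set α) = s + Set.Ici (0 : α) := by
    rw [← UpperSet.coe_Ici, ← upperClosure_singleton, add_upperClosure, Set.singleton_zero,
      add_zero]
  rw [this]
  exact isClosed_Ici.add_left_of_isCompact hs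

section Minimax

variable {ι : Type*} {E : Type*} [AddCommGroup E] [Module ℝ E]

theorem exists_mem_stdSimplex_sum_mul_lt_of_notMem [Fintype ι] {A : Set (ι → ℝ)}
    (hAc : IsClosed A) (hAconv : Convex ℝ A) (hAup : IsUpperSet A) (hAne : A.Nonempty)
    {v : ι → ℝ} (hv : v ∉ A) :
    ∃ q ∈ stdSimplex ℝ ι, ∀ a ∈ A, ∑ i, q i * v i < ∑ i, q i * a i := by
  obtain ⟨f, u, hfv, hfA⟩ := geometric_hahn_banach_point_closed hAconv hAc hv
  set ν : ι → ℝ := fun i => f fun j => if i = j then 1 else 0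
  have hf : ∀ w, f w = ∑ i, ν i * w i := fun w => by
    simpa [smul_eq_mul, mul_comm] using f.toLinearMap.pi_apply_eq_sum_univ w
  -- `f` is bounded below on the upper set `A`, which forces `ν ≥ 0`.
  have hν : ∀ i, 0 ≤ ν i := by
    intro i
    by_contra! hi
    obtain ⟨a, ha⟩ := hAne
    set t := (f a - u) / -ν i
    have ht : 0 ≤ t := div_nonneg (by linarith [hfA a ha]) (by linarith)
    have hmem : a + t • (fun j => if i = j then 1 else 0) ∈ A :=
      hAup (le_add_of_nonneg_right (smul_nonneg ht fun j => by split_ifs <;> norm_num)) ha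
    have hlt := hfA _ hmem
    rw [map_add, map_smul, smul_eq_mul] at hlt
    have : t * ν i = u - f a := by
      simp only [t]
      field_simp [hi.ne]
      ring
    linarith
  have hsep : ∀ a ∈ A, ∑ i, ν i * v i < ∑ i, ν i * a i := fun a ha => by
    simpa only [hf] using hfv.trans (hfA a ha)
  have hpos : 0 < ∑ i, ν i := by
    refine (Finset.sum_nonneg fun i _ => hν i).lt_of_ne fun h0 => ?_
    have hν0 := (Finset.sum_eq_zero_iff_of_nonneg fun i _ => hν i).1 h0.symm
    obtain ⟨a, ha⟩ := hAne
    simpa [hν0] using hsep a ha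
  refine ⟨fun i => ν i / ∑ j, ν j, ⟨fun i => div_nonneg (hν i) hpos.le, ?_⟩, fun a ha => ?_⟩
  · rw [← Finset.sum_div, div_self hpos.ne']
  · simp only [div_mul_eq_mul_div, ← Finset.sum_div]
    exact div_lt_div_of_pos_right (hsep a ha) hpos

theorem convex_upperClosure_image {K : Set E} (hK : Convex ℝ K) {g : ι → E → ℝ}
    (hg : ∀ i, ConvexOn ℝ K (g i)) :
    Convex ℝ (upperClosure ((fun ξ i => g i ξ) '' K) : Set (ι → ℝ)) := by
  rintro u hu v hv a b ha hb hab
  obtain ⟨_, ⟨ξ, hξ, rfl⟩, hξu⟩ := mem_upperClosure.1 hu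
  obtain ⟨_, ⟨η, hη, rfl⟩, hηv⟩ := mem_upperClosure.1 hv
  refine mem_upperClosure.2 ⟨_, ⟨a • ξ + b • η, hK hξ hη ha hb hab, rfl⟩, fun i => ?_⟩
  calc g i (a • ξ + b • η) ≤ a • g i ξ + b • g i η := (hg i).2 hξ hη ha hb hab
    _ ≤ a * u i + b * v i := by
      simp only [smul_eq_mul]
      gcongr
      exacts [hξu i, hηv i]

variable [TopologicalSpace E]

theorem exists_forall_le_of_forall_sum_mul_le [Fintype ι] {K : Set E}
    (hK : IsCompact K) (hKne : K.Nonempty) {g : ι → E → ℝ} (hconv : ∀ i, ConvexOn ℝ K (g i))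
    (hcont : ∀ i, ContinuousOn (g i) K) {ε : ℝ}
    (h : ∀ q ∈ stdSimplex ℝ ι, ∃ ξ ∈ K, ∑ i, q i * g i ξ ≤ ε) :
    ∃ ξ ∈ K, ∀ i, g i ξ ≤ ε := by
  by_contra! hbad
  obtain ⟨i₀, -⟩ := hbad _ hKne.some_mem
  set A : Set (ι → ℝ) := ↑(upperClosure ((fun ξ i => g i ξ) '' K))
  have hεA : (fun _ => ε) ∉ A := fun hmem => by
    obtain ⟨_, ⟨ξ, hξ, rfl⟩, hle⟩ := mem_upperClosure.1 hmem
    obtain ⟨i, hi⟩ := hbad ξ hξ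
    exact (hle i).not_gt hi
  obtain ⟨q, hq, hqA⟩ := exists_mem_stdSimplex_sum_mul_lt_of_notMem
    (hK.image_of_continuousOn (continuousOn_pi.2 hcont)).isClosed_upperClosure
    (convex_upperClosure_image (hconv i₀).1 hconv) (upperClosure _).upper
    ((hKne.image _).mono subset_upperClosure) hεA
  obtain ⟨ξ, hξ, hle⟩ := h q hq
  have := hqA _ (subset_upperClosure ⟨ξ, hξ, rfl⟩)
  rw [← Finset.sum_mul, hq.2, one_mul] at this
  linarith

theorem exists_forall_le_of_forall_finset_sum_mul_le {K : Set E}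
    (hK : IsCompact K) (hKne : K.Nonempty) {g : ι → E → ℝ} (hconv : ∀ i, ConvexOn ℝ K (g i))
    (hcont : ∀ i, Continuous (g i)) {ε : ℝ}
    (h : ∀ u : Finset ι, ∀ q ∈ stdSimplex ℝ u, ∃ ξ ∈ K, ∑ i, q i * g i ξ ≤ ε) :
    ∃ ξ ∈ K, ∀ i, g i ξ ≤ ε := by
  obtain ⟨ξ, hξK, hξ⟩ := hK.inter_iInter_nonempty (fun i => {ξ | g i ξ ≤ ε})
    (fun i => isClosed_le (hcont i) continuous_const) fun u => by
      obtain ⟨ξ, hξK, hξ⟩ := exists_forall_le_of_forall_sum_mul_le (ι := u) hK hKne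
        (fun i => hconv i) (fun i => (hcont i).continuousOn) (h u)
      exact ⟨ξ, hξK, mem_iInter₂.2 fun i hi => hξ ⟨i, hi⟩⟩
  exact ⟨ξ, hξK, fun i => mem_iInter.1 hξ i⟩

end Minimax

section MeanFamilies

variable {X : Type*}

def stdSimplexOn (s : Finset X) : Set (X → ℝ) :=
  {v | (∀ z, 0 ≤ v z) ∧ (∀ z ∉ s, v z = 0) ∧ ∑ z ∈ s, v z = 1}

theorem convex_stdSimplexOn (s : Finset X) : Convex ℝ (stdSimplexOn s) := by
  rintro u ⟨hu0, hus, hu1⟩ v ⟨hv0, hvs, hv1⟩ a b ha hb hab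
  refine ⟨fun z => ?_, fun z hz => ?_, ?_⟩
  · simp only [Pi.add_apply, Pi.smul_apply, smul_eq_mul]
    have := hu0 z; have := hv0 z
    positivity
  · simp [hus z hz, hvs z hz]
  · simp [Finset.sum_add_distrib, ← Finset.mul_sum, hu1, hv1, hab]

theorem isCompact_stdSimplexOn (s : Finset X) : IsCompact (stdSimplexOn s) := by
  have hclosed : IsClosed (stdSimplexOn s) := by
    simp only [stdSimplexOn, ofPred_and, ofPred_forall]
    exact (isClosed_iInter fun z => isClosed_le continuous_const (continuous_apply z)).inter
      ((isClosed_iInter fun z => isClosed_iInter fun _ =>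
        isClosed_eq (continuous_apply z) continuous_const).inter
        (isClosed_eq (continuous_finsetSum _ fun z _ => continuous_apply z) continuous_const))
  refine (isCompact_univ_pi fun _ => isCompact_Icc (a := (0 : ℝ)) (b := 1)).of_isClosed_subset
    hclosed fun v ⟨hv0, hvs, hv1⟩ z _ => ⟨hv0 z, ?_⟩
  by_cases hz : z ∈ s
  · exact hv1 ▸ Finset.single_le_sum (fun i _ => hv0 i) hz
  · simp [hvs z hz]

theorem single_mem_stdSimplexOn {s : Finset X} {a : X} (ha : a ∈ s) :
    Pi.single a 1 ∈ stdSimplexOn s := by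
  refine ⟨fun z => ?_, fun z hz => ?_, by simp [ha]⟩
  · by_cases h : z = a <;> simp [h]
  · simp [ne_of_mem_of_not_mem ha hz |>.symm]

theorem sum_eq_one_of_mem_stdSimplexOn {s t : Finset X} {v : X → ℝ} (hv : v ∈ stdSimplexOn s)
    (hst : s ⊆ t) : ∑ z ∈ t, v z = 1 :=
  hv.2.2 ▸ (Finset.sum_subset hst fun z _ hz => hv.2.1 z hz).symm

/-- `‖ξ x - ξ y‖₁`, provided each `ξ x` is supported in `B x`. -/
noncomputable def l1Dist (B : X → Finset X) (ξ : X → X → ℝ) (x y : X) : ℝ :=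
  ∑ z ∈ B x ∪ B y, |ξ x z - ξ y z|

variable {B : X → Finset X}

theorem continuous_l1Dist (x y : X) : Continuous fun ξ => l1Dist B ξ x y := by
  unfold l1Dist
  fun_prop

theorem convexOn_l1Dist (x y : X) : ConvexOn ℝ univ fun ξ => l1Dist B ξ x y := by
  refine ⟨convex_univ, fun ξ _ η _ a b ha hb _ => ?_⟩
  simp only [l1Dist, smul_eq_mul, Finset.mul_sum, ← Finset.sum_add_distrib]
  refine Finset.sum_le_sum fun z _ => ?_
  calc |(a • ξ + b • η) x z - (a • ξ + b • η) y z|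
      = |a * (ξ x z - ξ y z) + b * (η x z - η y z)| := by
        simp only [Pi.add_apply, Pi.smul_apply, smul_eq_mul]
        ring_nf
    _ ≤ a * |ξ x z - ξ y z| + b * |η x z - η y z| := by
        refine (abs_add_le _ _).trans_eq ?_
        rw [abs_mul, abs_mul, abs_of_nonneg ha, abs_of_nonneg hb]

theorem l1Dist_le_two {ξ : X → X → ℝ} (hξ : ξ ∈ univ.pi fun x => stdSimplexOn (B x)) (x y : X) :
    l1Dist B ξ x y ≤ 2 := by
  have hx := hξ x trivial
  have hy := hξ y trivial
  calc l1Dist B ξ x y ≤ ∑ z ∈ B x ∪ B y, (ξ x z + ξ y z) :=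
        Finset.sum_le_sum fun z _ =>
          abs_sub_le_iff.2 ⟨by linarith [hy.1 z], by linarith [hx.1 z]⟩
    _ = 2 := by
        rw [Finset.sum_add_distrib, sum_eq_one_of_mem_stdSimplexOn hx subset_union_left,
          sum_eq_one_of_mem_stdSimplexOn hy subset_union_right]
        norm_num

theorem sum_abs_sub_le_l1Dist {ξ : X → X → ℝ} (hξ : ξ ∈ univ.pi fun x => stdSimplexOn (B x))
    (x y : X) (s : Finset X) : ∑ z ∈ s, |ξ x z - ξ y z| ≤ l1Dist B ξ x y := by
  calc ∑ z ∈ s, |ξ x z - ξ y z| = ∑ z ∈ s with z ∈ B x ∪ B y, |ξ x z - ξ y z| := by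
        refine (Finset.sum_filter_of_ne fun z _ hz => ?_).symm
        by_contra hzB
        simp only [Finset.mem_union, not_or] at hzB
        simp [(hξ x trivial).2.1 z hzB.1, (hξ y trivial).2.1 z hzB.2] at hz
    _ ≤ l1Dist B ξ x y :=
        Finset.sum_le_sum_of_subset_of_nonneg (fun z hz => (Finset.mem_filter.1 hz).2) fun _ _ _ =>
          abs_nonneg _

noncomputable def pairMarginal {κ : Type*} [Fintype κ] (π : κ → X × X) (q : κ → ℝ) (z : X) : ℝ :=
  ∑ k, q k * ((if (π k).1 = z then 1 else 0) + (if (π k).2 = z then 1 else 0))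

theorem pairMarginal_nonneg {κ : Type*} [Fintype κ] (π : κ → X × X) {q : κ → ℝ}
    (hq : ∀ k, 0 ≤ q k) (z : X) : 0 ≤ pairMarginal π q z :=
  Finset.sum_nonneg fun k _ => mul_nonneg (hq k) (by positivity)

theorem sum_pairMarginal {κ : Type*} [Fintype κ] (π : κ → X × X) (q : κ → ℝ) (t : Finset X) :
    ∑ z ∈ t, pairMarginal π q z =
      ∑ k, q k * ((if (π k).1 ∈ t then 1 else 0) + (if (π k).2 ∈ t then 1 else 0)) := by
  unfold pairMarginal
  rw [Finset.sum_comm]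
  simp only [← Finset.mul_sum, Finset.sum_add_distrib, Finset.sum_ite_eq]

end MeanFamilies

section Clustering

variable {X : Type*}

theorem measOf_eq_sum_filter {μ : X → ℝ} {s : Finset X} (hμ : ∀ z ∉ s, μ z = 0) (A : Set X) :
    measOf μ A = ∑ z ∈ s with z ∈ A, μ z := by
  rw [measOf, _root_.tsum_subtype, tsum_eq_sum (s := s) fun z hz => by simp [hμ z hz],
    Finset.sum_filter]
  rfl

variable [MetricSpace X] {R ε S : ℝ}

theorem exists_folner_of_sum_pos
    (hU : ∀ μ : X → ℝ, IsProbFn μ → ∃ E : Set X, E.Finite ∧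
      Metric.ediam E ≤ ENNReal.ofReal S ∧ measOf μ (bdry R E) < ε * measOf μ E)
    {w : X → ℝ} (hw : ∀ z, 0 ≤ w z) {s : Finset X} (hs : 0 < ∑ z ∈ s, w z) :
    ∃ E : Set X, Metric.ediam E ≤ ENNReal.ofReal S ∧
      ∑ z ∈ s with z ∈ bdry R E, w z < ε * ∑ z ∈ s with z ∈ E, w z := by
  set μ : X → ℝ := fun z => if z ∈ s then w z / ∑ y ∈ s, w y else 0
  have hμ : ∀ z ∉ s, μ z = 0 := fun z hz => if_neg hz
  have hmeas : ∀ A, measOf μ A = (∑ z ∈ s with z ∈ A, w z) / ∑ y ∈ s, w y := fun A => by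
    rw [measOf_eq_sum_filter hμ, Finset.sum_div]
    exact Finset.sum_congr rfl fun z hz => if_pos (Finset.mem_filter.1 hz).1
  have hprob : IsProbFn μ := by
    refine ⟨fun z => ?_, summable_of_ne_finset_zero hμ, ?_⟩
    · by_cases hz : z ∈ s
      · exact (if_pos hz).trans_ge (div_nonneg (hw z) hs.le)
      · exact (if_neg hz).ge
    · have := hmeas univ
      rw [measOf, tsum_univ] at this
      simpa [this] using div_self hs.ne'
  obtain ⟨E, -, hdiam, hE⟩ := hU μ hprob
  rw [hmeas, hmeas, ← mul_div_assoc, div_lt_div_iff_of_pos_right hs] at hE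
  exact ⟨E, hdiam, hE⟩

def IsClustering (R S : ℝ) (G : Finset X) (c : X → X) : Prop :=
  (∀ z, dist z (c z) ≤ S) ∧ ∀ x ∈ G, ∀ y ∈ G, dist x y ≤ R → c x = c y

theorem IsClustering.union {G C : Finset X} {c : X → X} (hc : IsClustering R S G c) {c₀ : X}
    (hc₀ : ∀ z ∈ C, dist z c₀ ≤ S) (hfar : ∀ z ∈ G, ∀ a ∈ C, R < dist z a) :
    IsClustering R S (C ∪ G) fun z => if z ∈ C then c₀ else c z := by
  refine ⟨fun z => ?_, fun x hx y hy hxy => ?_⟩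
  · dsimp only
    split_ifs with hz
    exacts [hc₀ z hz, hc.1 z]
  by_cases hxC : x ∈ C <;> by_cases hyC : y ∈ C
  · simp [hxC, hyC]
  · have hyG := (Finset.mem_union.1 hy).resolve_left hyC
    exact absurd (dist_comm x y ▸ hfar y hyG x hxC) hxy.not_gt
  · have hxG := (Finset.mem_union.1 hx).resolve_left hxC
    exact absurd (hfar x hxG y hyC) hxy.not_gt
  · have hxG := (Finset.mem_union.1 hx).resolve_left hxC
    have hyG := (Finset.mem_union.1 hy).resolve_left hyC
    simp [hxC, hyC, hc.2 x hxG y hyG hxy]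

/-- Extract `C = s ∩ E` for a Følner set `E`, discard the `R`-neighbourhood of `C` (whose weight
outside `C` lies in `∂_R E`), and recurse. -/
theorem exists_clustering (hR : 0 ≤ R) (hS : 0 ≤ S) {w : X → ℝ} (hw : ∀ z, 0 ≤ w z)
    (hF : ∀ s : Finset X, 0 < ∑ z ∈ s, w z → ∃ E : Set X, Metric.ediam E ≤ ENNReal.ofReal S ∧
      ∑ z ∈ s with z ∈ bdry R E, w z < ε * ∑ z ∈ s with z ∈ E, w z)
    (s : Finset X) :
    ∃ G ⊆ s, ∃ c : X → X, IsClustering R S G c ∧ ∑ z ∈ s \ G, w z ≤ ε * ∑ z ∈ G, w z := by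
  induction s using Finset.strongInduction with
  | H s ih =>
  by_cases hpos : 0 < ∑ z ∈ s, w z
  swap
  · exact ⟨∅, empty_subset _, id, ⟨fun z => by simpa using hS, by simp⟩, by simpa using hpos⟩
  obtain ⟨E, hdiam, hE⟩ := hF s hpos
  set C := s.filter (· ∈ E)
  have hCE : ∀ z ∈ C, z ∈ E := fun z hz => (Finset.mem_filter.1 hz).2
  obtain ⟨c₀, hc₀⟩ : C.Nonempty := Finset.nonempty_of_sum_ne_zero fun h0 => by
    have := Finset.sum_nonneg fun z (_ : z ∈ s.filter (· ∈ bdry R E)) => hw z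
    rw [h0, mul_zero] at hE
    linarith
  set s' := s.filter fun z => ∀ a ∈ C, R < dist z a
  have hs' : s' ⊂ s := Finset.filter_ssubset.2
    ⟨c₀, (Finset.mem_filter.1 hc₀).1, fun h => (h c₀ hc₀).not_ge (by simpa using hR)⟩
  obtain ⟨G', hG', c', hc', hG'w⟩ := ih s' hs'
  have hfar : ∀ z ∈ G', ∀ a ∈ C, R < dist z a := fun z hz => (Finset.mem_filter.1 (hG' hz)).2
  have hdisj : Disjoint C G' := Finset.disjoint_left.2 fun z hzC hzG =>
    (hfar z hzG z hzC).not_ge (by simpa using hR)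
  refine ⟨C ∪ G', union_subset (filter_subset _ _) (hG'.trans (filter_subset _ _)), _,
    hc'.union (fun z hz => (edist_le_ofReal hS).1
      ((Metric.edist_le_ediam_of_mem (hCE z hz) (hCE c₀ hc₀)).trans hdiam)) hfar, ?_⟩
  have hsub : s \ (C ∪ G') ⊆ s.filter (· ∈ bdry R E) ∪ (s' \ G') := by
    intro z hz
    simp only [Finset.mem_sdiff, Finset.mem_union, not_or] at hz
    obtain ⟨hzs, hzC, hzG⟩ := hz
    by_cases hzs' : z ∈ s'
    · exact Finset.mem_union_right _ (Finset.mem_sdiff.2 ⟨hzs', hzG⟩)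
    · obtain ⟨a, ha, hza⟩ : ∃ a ∈ C, dist z a ≤ R := by simpa [s', hzs] using hzs'
      refine Finset.mem_union_left _ (Finset.mem_filter.2 ⟨hzs, ⟨a, hCE a ha, hza⟩, ?_⟩)
      exact fun hzE => hzC (Finset.mem_filter.2 ⟨hzs, hzE⟩)
  calc ∑ z ∈ s \ (C ∪ G'), w z
      ≤ ∑ z ∈ s.filter (· ∈ bdry R E) ∪ (s' \ G'), w z :=
        Finset.sum_le_sum_of_subset_of_nonneg hsub fun z _ _ => hw z
    _ ≤ ∑ z ∈ s.filter (· ∈ bdry R E), w z + ∑ z ∈ s' \ G', w z := by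
        rw [← Finset.sum_union_inter]
        exact le_add_of_nonneg_right (Finset.sum_nonneg fun z _ => hw z)
    _ ≤ ε * ∑ z ∈ C, w z + ε * ∑ z ∈ G', w z := add_le_add hE.le hG'w
    _ = ε * ∑ z ∈ C ∪ G', w z := by rw [Finset.sum_union hdisj, mul_add]

end Clustering

section PropertyA

variable {X : Type*} [MetricSpace X]

structure IsPropertyAFamily (R ε S : ℝ) (ξ : X → X → ℝ) : Prop where
  nonneg : ∀ x z, 0 ≤ ξ x z
  eq_zero_of_lt_dist : ∀ x z, S < dist x z → ξ x z = 0
  hasSum_one : ∀ x, HasSum (ξ x) 1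
  sum_abs_sub_le : ∀ x y, dist x y ≤ R → ∀ s : Finset X, ∑ z ∈ s, |ξ x z - ξ y z| ≤ ε

def PropertyA (X : Type*) [MetricSpace X] : Prop :=
  ∀ R ε : ℝ, 0 < R → 0 < ε → ∃ (S : ℝ) (ξ : X → X → ℝ), IsPropertyAFamily R ε S ξ

variable {R ε S : ℝ} {B : X → Finset X}

theorem isPropertyAFamily_of_mem_pi (hB : ∀ x z, z ∈ B x ↔ dist x z ≤ S) {ξ : X → X → ℝ}
    (hξ : ξ ∈ univ.pi fun x => stdSimplexOn (B x))
    (hR : ∀ x y, dist x y ≤ R → l1Dist B ξ x y ≤ ε) : IsPropertyAFamily R ε S ξ where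
  nonneg x := (hξ x trivial).1
  eq_zero_of_lt_dist x z hz := (hξ x trivial).2.1 z fun h => ((hB x z).1 h).not_gt hz
  hasSum_one x := (hξ x trivial).2.2 ▸ hasSum_sum_of_ne_finset_zero (hξ x trivial).2.1
  sum_abs_sub_le x y hxy s := (sum_abs_sub_le_l1Dist hξ x y s).trans (hR x y hxy)

/-- The witness is the family of point masses at the cluster representatives that
`exists_clustering` produces for `pairMarginal π q`. -/
theorem exists_sum_mul_l1Dist_le
    (hU : ∀ μ : X → ℝ, IsProbFn μ → ∃ E : Set X, E.Finite ∧
      Metric.ediam E ≤ ENNReal.ofReal S ∧ measOf μ (bdry R E) < ε * measOf μ E)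
    (hR : 0 ≤ R) (hε : 0 ≤ ε) (hS : 0 ≤ S) (hB : ∀ x z, z ∈ B x ↔ dist x z ≤ S)
    {κ : Type*} [Fintype κ] (π : κ → X × X) (hπ : ∀ k, dist (π k).1 (π k).2 ≤ R)
    {q : κ → ℝ} (hq : q ∈ stdSimplex ℝ κ) :
    ∃ ξ ∈ univ.pi fun x => stdSimplexOn (B x), ∑ k, q k * l1Dist B ξ (π k).1 (π k).2 ≤ 4 * ε := by
  set sw := Finset.univ.image (fun k => (π k).1) ∪ Finset.univ.image (fun k => (π k).2)
  have hsw : ∀ k, (π k).1 ∈ sw ∧ (π k).2 ∈ sw := fun k =>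
    ⟨mem_union_left _ (mem_image_of_mem _ (mem_univ k)),
      mem_union_right _ (mem_image_of_mem _ (mem_univ k))⟩
  have hw := pairMarginal_nonneg π hq.1
  obtain ⟨G, hGsw, c, hc, hGw⟩ :=
    exists_clustering hR hS hw (fun s hs => exists_folner_of_sum_pos hU hw hs) sw
  set ξ : X → X → ℝ := fun x => Pi.single (c x) 1
  have hξ : ξ ∈ univ.pi fun x => stdSimplexOn (B x) := fun x _ =>
    single_mem_stdSimplexOn ((hB x (c x)).2 (hc.1 x))
  have hpair : ∀ k, l1Dist B ξ (π k).1 (π k).2 ≤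
      2 * ((if (π k).1 ∈ sw \ G then 1 else 0) + (if (π k).2 ∈ sw \ G then 1 else 0)) := by
    intro k
    by_cases h1 : (π k).1 ∈ G <;> by_cases h2 : (π k).2 ∈ G
    · simp [l1Dist, ξ, hc.2 _ h1 _ h2 (hπ k), h1, h2]
    all_goals
      have := l1Dist_le_two hξ (π k).1 (π k).2
      simp only [Finset.mem_sdiff, (hsw k).1, (hsw k).2, true_and, h1, h2]
      norm_num
      linarith
  refine ⟨ξ, hξ, ?_⟩
  calc ∑ k, q k * l1Dist B ξ (π k).1 (π k).2
      ≤ ∑ k, q k * (2 * ((if (π k).1 ∈ sw \ G then 1 else 0) +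
          (if (π k).2 ∈ sw \ G then 1 else 0))) :=
        Finset.sum_le_sum fun k _ => mul_le_mul_of_nonneg_left (hpair k) (hq.1 k)
    _ = 2 * ∑ z ∈ sw \ G, pairMarginal π q z := by
        rw [sum_pairMarginal, Finset.mul_sum]
        exact Finset.sum_congr rfl fun k _ => by ring
    _ ≤ 2 * (ε * ∑ z ∈ sw, pairMarginal π q z) := by
        gcongr
        exact hGw.trans (mul_le_mul_of_nonneg_left
          (Finset.sum_le_sum_of_subset_of_nonneg hGsw fun z _ _ => hw z) hε)
    _ = 4 * ε := by
        rw [sum_pairMarginal]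
        simp only [(hsw _).1, (hsw _).2, if_true]
        rw [← Finset.sum_mul, hq.2]
        ring

theorem BoundedGeometry.propertyA_of_ulamu (hbg : BoundedGeometry X) (h : ULAmu X) :
    PropertyA X := by
  intro R ε hR hε
  obtain ⟨S, hS, hU⟩ := h R hR (ε / 4) (by positivity)
  obtain ⟨_, hN⟩ := hbg S hS
  set B : X → Finset X := fun x => (hN x).1.toFinset
  have hB : ∀ x z, z ∈ B x ↔ dist x z ≤ S := fun x z => by simp [B]
  set K := univ.pi fun x => stdSimplexOn (B x)
  have hKconv : Convex ℝ K := convex_pi fun x _ => convex_stdSimplexOn _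
  have hKne : K.Nonempty := ⟨fun x => Pi.single x 1, fun x _ =>
    single_mem_stdSimplexOn ((hB x x).2 (by simpa using hS.le))⟩
  obtain ⟨ξ, hξK, hξ⟩ := exists_forall_le_of_forall_finset_sum_mul_le
    (ι := {p : X × X // dist p.1 p.2 ≤ R}) (g := fun p ξ => l1Dist B ξ p.1.1 p.1.2)
    (isCompact_univ_pi fun x => isCompact_stdSimplexOn _) hKne
    (fun p => (convexOn_l1Dist _ _).subset (subset_univ _) hKconv)
    (fun p => continuous_l1Dist _ _) fun u q hq => by
      simpa [mul_div_cancel₀] using exists_sum_mul_l1Dist_le hU hR.le (by positivity) hS.le hB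
        (fun k : u => k.1.1) (fun k => k.1.2) hq
  exact ⟨S, ξ, isPropertyAFamily_of_mem_pi hB hξK fun x y hxy => hξ ⟨(x, y), hxy⟩⟩

end PropertyA

section Embedding

theorem sq_sqrt_sub_sqrt_le_add {a b : ℝ} (ha : 0 ≤ a) (hb : 0 ≤ b) :
    (√a - √b) ^ 2 ≤ a + b := by
  nlinarith [Real.sq_sqrt ha, Real.sq_sqrt hb, mul_nonneg (Real.sqrt_nonneg a) (Real.sqrt_nonneg b)]

theorem sq_sqrt_sub_sqrt_le_abs_sub {a b : ℝ} (ha : 0 ≤ a) (hb : 0 ≤ b) :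
    (√a - √b) ^ 2 ≤ |a - b| := by
  rcases le_total b a with hab | hab
  · rw [abs_of_nonneg (sub_nonneg.2 hab)]
    nlinarith [Real.sq_sqrt ha, Real.sq_sqrt hb, Real.sqrt_le_sqrt hab, Real.sqrt_nonneg b]
  · rw [abs_of_nonpos (sub_nonpos.2 hab)]
    nlinarith [Real.sq_sqrt ha, Real.sq_sqrt hb, Real.sqrt_le_sqrt hab, Real.sqrt_nonneg a]

namespace IsPropertyAFamily

variable {X : Type*} [MetricSpace X] {R ε S : ℝ} {ξ : X → X → ℝ}

theorem hasSum_add (hξ : IsPropertyAFamily R ε S ξ) (x y : X) :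
    HasSum (fun z => ξ x z + ξ y z) 2 := by
  simpa [one_add_one_eq_two] using (hξ.hasSum_one x).add (hξ.hasSum_one y)

theorem summable_sq_sqrt_sub (hξ : IsPropertyAFamily R ε S ξ) (x y : X) :
    Summable fun z => (√(ξ x z) - √(ξ y z)) ^ 2 :=
  (hξ.hasSum_add x y).summable.of_nonneg_of_le (fun _ => sq_nonneg _) fun z =>
    sq_sqrt_sub_sqrt_le_add (hξ.nonneg x z) (hξ.nonneg y z)

theorem tsum_sq_sqrt_sub_le_two (hξ : IsPropertyAFamily R ε S ξ) (x y : X) :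
    ∑' z, (√(ξ x z) - √(ξ y z)) ^ 2 ≤ 2 :=
  hasSum_le (fun z => sq_sqrt_sub_sqrt_le_add (hξ.nonneg x z) (hξ.nonneg y z))
    (hξ.summable_sq_sqrt_sub x y).hasSum (hξ.hasSum_add x y)

theorem tsum_sq_sqrt_sub_le (hξ : IsPropertyAFamily R ε S ξ) {x y : X} (hxy : dist x y ≤ R) :
    ∑' z, (√(ξ x z) - √(ξ y z)) ^ 2 ≤ ε :=
  (hξ.summable_sq_sqrt_sub x y).tsum_le_of_sum_le fun s =>
    (Finset.sum_le_sum fun z _ => sq_sqrt_sub_sqrt_le_abs_sub (hξ.nonneg x z) (hξ.nonneg y z)).trans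
      (hξ.sum_abs_sub_le x y hxy s)

theorem tsum_sq_sqrt_sub_eq_two (hξ : IsPropertyAFamily R ε S ξ) {x y : X}
    (hxy : 2 * S < dist x y) : ∑' z, (√(ξ x z) - √(ξ y z)) ^ 2 = 2 := by
  have hdisj : ∀ z, (√(ξ x z) - √(ξ y z)) ^ 2 = ξ x z + ξ y z := by
    intro z
    have : ξ x z = 0 ∨ ξ y z = 0 := by
      by_contra! h
      have hx := not_lt.1 (mt (hξ.eq_zero_of_lt_dist x z) h.1)
      have hy := not_lt.1 (mt (hξ.eq_zero_of_lt_dist y z) h.2)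
      linarith [dist_triangle_right x y z]
    rcases this with h | h <;> simp [h, Real.sq_sqrt (hξ.nonneg _ _)]
  rw [tsum_congr hdisj, (hξ.hasSum_add x y).tsum_eq]

end IsPropertyAFamily

theorem summable_and_tsum_le_of_le_geometric {a : ℕ → ℝ} {t : ℝ} (ht : 0 ≤ t)
    (h0 : ∀ k, 0 ≤ a k) (h2 : ∀ k, a k ≤ 2) (hgeom : ∀ k : ℕ, t ≤ k + 1 → a k ≤ (1 / 2) ^ k) :
    Summable a ∧ ∑' k, a k ≤ 2 * t + 4 := by
  set N := ⌈t⌉₊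
  set b : ℕ → ℝ := fun k => (if k < N then 2 else 0) + (1 / 2) ^ k
  have hb : HasSum b (2 * N + 2) := by
    refine HasSum.add ?_ hasSum_geometric_two
    have : HasSum (fun k : ℕ => if k < N then (2 : ℝ) else 0)
        (∑ k ∈ range N, if k < N then 2 else 0) :=
      hasSum_sum_of_ne_finset_zero fun k hk => if_neg (by simpa using hk)
    rwa [Finset.sum_congr rfl fun k hk => if_pos (Finset.mem_range.1 hk), sum_const, card_range,
      nsmul_eq_mul, mul_comm] at this
  have hab : ∀ k, a k ≤ b k := fun k => by
    by_cases hk : k < N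
    · simpa [b, hk] using (h2 k).trans (le_add_of_nonneg_right (by positivity))
    · have : t ≤ k + 1 := by linarith [Nat.ceil_le.1 (not_lt.1 hk)]
      simpa [b, hk] using hgeom k this
  have hs : Summable a := hb.summable.of_nonneg_of_le h0 hab
  refine ⟨hs, (hasSum_le hab hs.hasSum hb).trans ?_⟩
  linarith [Nat.ceil_lt_add_one ht]

noncomputable def countBelow (T : ℕ → ℝ) (t : ℝ) : ℕ :=
  #{k ∈ range ⌈t⌉₊ | T k < t}

theorem monotone_countBelow (T : ℕ → ℝ) : Monotone (countBelow T) := fun s t hst =>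
  card_le_card fun k hk => by
    simp only [mem_filter, Finset.mem_range] at hk ⊢
    exact ⟨hk.1.trans_le (Nat.ceil_mono hst), hk.2.trans_le hst⟩

theorem tendsto_countBelow_atTop (T : ℕ → ℝ) : Tendsto (countBelow T) atTop atTop := by
  refine tendsto_atTop_atTop.2 fun n => ⟨n + ∑ k ∈ range n, |T k| + 1, fun t ht => ?_⟩
  have hsum : 0 ≤ ∑ k ∈ range n, |T k| := Finset.sum_nonneg fun k _ => abs_nonneg _
  calc n = #(range n) := (card_range n).symm
    _ ≤ countBelow T t := card_le_card fun k hk => by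
        have hkn : (k : ℝ) + 1 ≤ n := by exact_mod_cast Finset.mem_range.1 hk
        have hTk : T k ≤ ∑ j ∈ range n, |T j| :=
          (le_abs_self _).trans (single_le_sum (fun j _ => abs_nonneg (T j)) hk)
        simp only [mem_filter, Finset.mem_range]
        exact ⟨Nat.lt_ceil.2 (by linarith), by linarith⟩

theorem exists_lp_two_dist_eq {α X : Type*} (v : X → α → ℝ) (x₀ : X)
    (hv : ∀ x y, Summable fun a => (v x a - v y a) ^ 2) :
    ∃ f : X → lp (fun _ : α => ℝ) 2, ∀ x y, dist (f x) (f y) = √(∑' a, (v x a - v y a) ^ 2) := by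
  have hnorm : ∀ u : lp (fun _ : α => ℝ) 2, ‖u‖ = √(∑' a, u a ^ 2) := fun u => by
    have := lp.norm_rpow_eq_tsum (p := 2) (by norm_num) u
    simp only [ENNReal.toReal_ofNat, Real.rpow_two, Real.norm_eq_abs, sq_abs] at this
    rw [← this, Real.sqrt_sq (norm_nonneg _)]
  have hmem : ∀ x, Memℓp (v x - v x₀) 2 := fun x =>
    (memℓp_gen_iff (by norm_num)).2 (by simpa [Real.rpow_two] using hv x x₀)
  refine ⟨fun x => ⟨v x - v x₀, hmem x⟩, fun x y => ?_⟩
  rw [dist_eq_norm, hnorm]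
  congr 1
  exact tsum_congr fun a => by
    rw [lp.coeFn_sub]
    change (v x a - v x₀ a - (v y a - v x₀ a)) ^ 2 = _
    ring

theorem exists_lp_nat_dist_eq {α X : Type*} [Countable α] [Infinite α] (v : X → α → ℝ) (x₀ : X)
    (hv : ∀ x y, Summable fun a => (v x a - v y a) ^ 2) :
    ∃ f : X → lp (fun _ : ℕ => ℝ) 2, ∀ x y, dist (f x) (f y) = √(∑' a, (v x a - v y a) ^ 2) := by
  have : Denumerable α := (nonempty_denumerable α).some
  set e := (Denumerable.eqv α).symm
  obtain ⟨f, hf⟩ := exists_lp_two_dist_eq (fun x n => v x (e n)) x₀ fun x y =>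
    e.summable_iff.2 (hv x y)
  exact ⟨f, fun x y => by rw [hf, e.tsum_eq fun a => (v x a - v y a) ^ 2]⟩

theorem PropertyA.exists_coarseEmbedding_lp {X : Type*} [MetricSpace X] [Countable X]
    (hA : PropertyA X) : ∃ f : X → lp (fun _ : ℕ => ℝ) 2, CoarseEmbedding f := by
  rcases isEmpty_or_nonempty X with hX | hX
  · exact ⟨isEmptyElim, id, id, monotone_id, monotone_id, tendsto_id, isEmptyElim⟩
  choose S ξ hξ using fun k : ℕ => hA (k + 1) ((1 / 2) ^ k) (by positivity) (by positivity)
  set D : X → X → ℕ → ℝ := fun x y k => ∑' z, (√(ξ k x z) - √(ξ k y z)) ^ 2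
  have hD : ∀ x y, Summable (D x y) ∧ ∑' k, D x y k ≤ 2 * dist x y + 4 := fun x y =>
    summable_and_tsum_le_of_le_geometric dist_nonneg (fun k => tsum_nonneg fun z => sq_nonneg _)
      (fun k => (hξ k).tsum_sq_sqrt_sub_le_two x y) fun k hk => (hξ k).tsum_sq_sqrt_sub_le hk
  have hprod : ∀ x y, HasSum (fun p : ℕ × X => (√(ξ p.1 x p.2) - √(ξ p.1 y p.2)) ^ 2)
      (∑' k, D x y k) := fun x y => by
    have hs : Summable fun p : ℕ × X => (√(ξ p.1 x p.2) - √(ξ p.1 y p.2)) ^ 2 :=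
      (summable_prod_of_nonneg fun _ => sq_nonneg _).2
        ⟨fun k => (hξ k).summable_sq_sqrt_sub x y, (hD x y).1⟩
    convert hs.hasSum using 1
    exact (hs.tsum_prod' fun k => (hξ k).summable_sq_sqrt_sub x y).symm
  obtain ⟨f, hf⟩ := exists_lp_nat_dist_eq (fun x (p : ℕ × X) => √(ξ p.1 x p.2))
    (Classical.arbitrary X) fun x y => (hprod x y).summable
  have hfD : ∀ x y, dist (f x) (f y) = √(∑' k, D x y k) := fun x y => by
    rw [hf, (hprod x y).tsum_eq]
  refine ⟨f, fun t => √(2 * countBelow (fun k => 2 * S k) t), fun t => √(2 * t + 4),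
    fun s t hst => Real.sqrt_le_sqrt ?_, fun s t hst => Real.sqrt_le_sqrt (by linarith), ?_,
    fun x y => ⟨?_, (hfD x y).symm ▸ Real.sqrt_le_sqrt (hD x y).2⟩⟩
  · gcongr
    exact monotone_countBelow _ hst
  · exact Real.tendsto_sqrt_atTop.comp
      ((tendsto_natCast_atTop_atTop.comp (tendsto_countBelow_atTop _)).const_mul_atTop two_pos)
  · rw [hfD]
    refine Real.sqrt_le_sqrt ?_
    calc 2 * (countBelow (fun k => 2 * S k) (dist x y) : ℝ)
        = ∑ k ∈ range ⌈dist x y⌉₊ with 2 * S k < dist x y, D x y k := by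
          rw [Finset.sum_congr rfl fun k hk =>
            (hξ k).tsum_sq_sqrt_sub_eq_two (Finset.mem_filter.1 hk).2]
          simp [countBelow, mul_comm]
      _ ≤ ∑' k, D x y k := (hD x y).1.sum_le_tsum _ fun k _ => tsum_nonneg fun z => sq_nonneg _

end Embedding

theorem BoundedGeometry.countable {X : Type*} [MetricSpace X] (hbg : BoundedGeometry X) :
    Countable X := by
  rcases isEmpty_or_nonempty X with hX | ⟨⟨x₀⟩⟩
  · infer_instance
  refine Set.countable_univ_iff.1 (Set.Countable.mono (fun y _ => mem_iUnion.2
    ⟨⌈dist x₀ y⌉₊, ?_⟩) (Set.countable_iUnion fun n : ℕ =>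
      ((hbg (n + 1) (by positivity)).choose_spec x₀).1.countable))
  show dist x₀ y ≤ ⌈dist x₀ y⌉₊ + 1
  linarith [Nat.le_ceil (dist x₀ y)]

/-- Corollary 3.5: $ULA_\mu$ implies coarse embeddability into the real Hilbert space
$\ell^2(\mathbb N)$ for bounded geometry metric spaces. -/
theorem ulamu_implies_coarse_embeddable {X : Type*} [MetricSpace X]
    (hbg : BoundedGeometry X) (h : ULAmu X) :
    ∃ f : X → lp (fun _ : ℕ => ℝ) 2, CoarseEmbedding f :=
  have := hbg.countable
  (hbg.propertyA_of_ulamu h).exists_coarseEmbedding_lp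
end

section
/- Let X be a bounded geometry metric space with the metric sparsification property. Then X has ULA_μ. -/
/-- The metric sparsification property with constant $c$. -/
def MSPwith (X : Type*) [MetricSpace X] (c : ℝ) : Prop :=
  ∀ R : ℝ, 0 < R → ∃ S : ℝ, 0 < S ∧ ∀ μ : X → ℝ, IsProbFn μ →
    ∃ (ι : Type) (Ω : ι → Set X),
      (∀ i, EMetric.diam (Ω i) ≤ ENNReal.ofReal S) ∧
      (∀ i j, i ≠ j → ∀ a ∈ Ω i, ∀ b ∈ Ω j, R < dist a b) ∧
      c ≤ measOf μ (⋃ i, Ω i)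

/-!
Apply the metric sparsification property with separation `2R` and a constant `c` so close to `1`
that `1 - c < ε c`. The `R`-boundaries of the resulting pieces are pairwise disjoint and miss all
pieces, so their total mass is at most `1 - c`, while the pieces carry mass at least `c`; hence
some piece `Ω i` satisfies `μ(∂_R Ω i) < ε μ(Ω i)`. By bounded geometry the pieces, having
diameter at most `S`, are finite.
-/

open Function

section measOf

variable {X : Type*} {μ : X → ℝ}

lemma measOf_mono (h0 : ∀ x, 0 ≤ μ x) (hs : Summable μ) {A B : Set X} (h : A ⊆ B) :
    measOf μ A ≤ measOf μ B := by
  rw [measOf, measOf, tsum_subtype, tsum_subtype]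
  exact (hs.indicator A).tsum_mono (hs.indicator B) (Set.indicator_le_indicator_of_subset h h0)

lemma measOf_biUnion_finset {ι : Type*} (hs : Summable μ) {J : Finset ι} {A : ι → Set X}
    (hd : Pairwise (Disjoint on A)) :
    measOf μ (⋃ i ∈ J, A i) = ∑ i ∈ J, measOf μ (A i) :=
  Summable.tsum_finset_bUnion_disjoint (hd.set_pairwise _) fun _ _ => hs.subtype _

lemma measOf_compl (hμ : IsProbFn μ) (A : Set X) : measOf μ Aᶜ = 1 - measOf μ A := by
  have h := hμ.2.1.tsum_subtype_add_tsum_subtype_compl A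
  rw [hμ.2.2] at h
  rw [measOf, ← h, measOf]
  ring

/-- A finite set carrying almost all of `μ(⋃ i, A i)` meets only finitely many pieces. -/
lemma exists_finset_lt_sum_measOf {ι : Type*} (h0 : ∀ x, 0 ≤ μ x) (hs : Summable μ)
    {A : ι → Set X} (hd : Pairwise (Disjoint on A)) {t : ℝ}
    (ht : t < measOf μ (⋃ i, A i)) : ∃ J : Finset ι, t < ∑ i ∈ J, measOf μ (A i) := by
  classical
  obtain ⟨s, hts⟩ :=
    ((hs.subtype (⋃ i, A i)).hasSum.eventually (eventually_gt_nhds ht)).exists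
  let piece : (⋃ i, A i) → ι := fun x => (Set.mem_iUnion.1 x.2).choose
  have mem_piece : ∀ x, (x : X) ∈ A (piece x) := fun x => (Set.mem_iUnion.1 x.2).choose_spec
  refine ⟨s.image piece, hts.trans_le ?_⟩
  calc ∑ x ∈ s, μ x.1
      = measOf μ ↑(s.map (Embedding.subtype (· ∈ ⋃ i, A i))) := by
        rw [measOf, Finset.tsum_subtype', Finset.sum_map]; rfl
    _ ≤ measOf μ (⋃ i ∈ s.image piece, A i) := by
        refine measOf_mono h0 hs fun x hx => ?_
        obtain ⟨y, hy, rfl⟩ := Finset.mem_map.1 hx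
        exact Set.mem_biUnion (Finset.mem_image_of_mem piece hy) (mem_piece y)
    _ = ∑ i ∈ s.image piece, measOf μ (A i) := measOf_biUnion_finset hs hd

end measOf

section SeparatedFamily

variable {X : Type*} [MetricSpace X] {ι : Type*}

def SeparatedFamily (r : ℝ) (A : ι → Set X) : Prop :=
  ∀ i j, i ≠ j → ∀ a ∈ A i, ∀ b ∈ A j, r < dist a b

variable {r R : ℝ} {A : ι → Set X}

lemma SeparatedFamily.mono {s : ℝ} (h : SeparatedFamily r A) (hsr : s ≤ r) :
    SeparatedFamily s A :=
  fun i j hij a ha b hb => hsr.trans_lt (h i j hij a ha b hb)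

lemma SeparatedFamily.pairwise_disjoint (h : SeparatedFamily r A) (hr : 0 ≤ r) :
    Pairwise (Disjoint on A) := fun i j hij =>
  Set.disjoint_left.2 fun a hai haj => by
    have := h i j hij a hai a haj
    rw [dist_self] at this
    linarith

lemma SeparatedFamily.separatedFamily_bdry (h : SeparatedFamily (2 * R) A) :
    SeparatedFamily 0 fun i => bdry R (A i) := by
  rintro i j hij x ⟨⟨a, ha, hxa⟩, -⟩ y ⟨⟨b, hb, hyb⟩, -⟩
  have hab := h i j hij a ha b hb
  have := dist_triangle4 a x y b
  rw [dist_comm a x] at this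
  linarith

lemma SeparatedFamily.bdry_subset_compl_iUnion (h : SeparatedFamily R A) (i : ι) :
    bdry R (A i) ⊆ (⋃ j, A j)ᶜ := by
  rintro x ⟨⟨a, ha, hxa⟩, hxi⟩ hx
  obtain ⟨j, hxj⟩ := Set.mem_iUnion.1 hx
  have hij : i ≠ j := by rintro rfl; exact hxi hxj
  have := h i j hij a ha x hxj
  rw [dist_comm] at this
  linarith

lemma SeparatedFamily.sum_measOf_bdry_le {μ : X → ℝ} (hμ : IsProbFn μ) (hR : 0 ≤ R)
    (h : SeparatedFamily (2 * R) A) (J : Finset ι) :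
    ∑ i ∈ J, measOf μ (bdry R (A i)) ≤ 1 - measOf μ (⋃ i, A i) := by
  rw [← measOf_biUnion_finset hμ.2.1 (h.separatedFamily_bdry.pairwise_disjoint le_rfl),
    ← measOf_compl hμ]
  refine measOf_mono hμ.1 hμ.2.1 (Set.iUnion₂_subset fun i _ => ?_)
  exact (h.mono (by linarith)).bdry_subset_compl_iUnion i

end SeparatedFamily

lemma BoundedGeometry.finite_of_ediam_le {X : Type*} [MetricSpace X] (hbg : BoundedGeometry X)
    {S : ℝ} (hS : 0 < S) {E : Set X} (hE : Metric.ediam E ≤ ENNReal.ofReal S) : E.Finite := by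
  obtain rfl | ⟨x, hx⟩ := E.eq_empty_or_nonempty
  · exact Set.finite_empty
  obtain ⟨N, hN⟩ := hbg S hS
  refine (hN x).1.subset fun y hy => ?_
  have hxy : edist x y ≤ ENNReal.ofReal S := (Metric.edist_le_ediam_of_mem hx hy).trans hE
  rwa [edist_dist, ENNReal.ofReal_le_ofReal_iff hS.le] at hxy

/-- Half of Theorem 3.8: the metric sparsification property implies $ULA_\mu$.
(By Chen–Tessera–Wang–Yu, $MSP$ for one constant $c \in (0,1)$ implies it for all such
constants, so $MSP$ is taken here with every constant $c \in (0,1)$.) -/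
theorem msp_implies_ulamu {X : Type*} [MetricSpace X] (hbg : BoundedGeometry X)
    (hmsp : ∀ c : ℝ, 0 < c → c < 1 → MSPwith X c) : ULAmu X := by
  intro R hR ε hε
  obtain ⟨c, hc_gt, hc1⟩ : ∃ c, 1 / (1 + ε) < c ∧ c < 1 :=
    exists_between ((div_lt_one (by linarith)).2 (by linarith))
  have hc0 : 0 < c := lt_trans (by positivity) hc_gt
  have hgap : (1 - c) / ε < c := by
    rw [div_lt_iff₀ (by linarith)] at hc_gt
    rw [div_lt_iff₀ hε]
    linarith
  obtain ⟨S, hS, hsparse⟩ := hmsp c hc0 hc1 (2 * R) (by linarith)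
  refine ⟨S, hS, fun μ hμ => ?_⟩
  obtain ⟨ι, Ω, hdiam, hsep, hmass⟩ := hsparse μ hμ
  have hsep : SeparatedFamily (2 * R) Ω := hsep
  obtain ⟨J, hJ⟩ := exists_finset_lt_sum_measOf hμ.1 hμ.2.1
    (hsep.pairwise_disjoint (by linarith)) (hgap.trans_le hmass)
  have hlt : ∑ i ∈ J, measOf μ (bdry R (Ω i)) < ∑ i ∈ J, ε * measOf μ (Ω i) := by
    rw [← Finset.mul_sum]
    rw [div_lt_iff₀' hε] at hJ
    linarith [hsep.sum_measOf_bdry_le hμ hR.le J]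
  obtain ⟨i, -, hi⟩ := Finset.exists_lt_of_sum_lt hlt
  exact ⟨Ω i, hbg.finite_of_ediam_le hS (hdiam i), hdiam i, hi⟩
end
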